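/- Let K be a commutative semiring and A a finite alphabet. Let R be a formal series with linear representation (λ₁, μ₁, γ₁) of dimension n and S a formal series with linear representation (λ₂, μ₂, γ₂) of dimension m. Let μ : A* → K^{nm×nm} be the monoid morphism determined on letters by μ(a) = μ₁(a) ⊗ I_m + I_n ⊗ μ₂(a) (Kronecker products and identity matrices). Then (λ₁⊗λ₂, μ, γ₁⊗γ₂) is a linear representation of the shuffle product R ⧢ S, i.e. (λ₁⊗λ₂) μ(w) (γ₁⊗γ₂) = Σ_{I⊔J={1,…,|w|}} ⟨R|w[I]⟩⟨S|w[J]⟩ for every word w ∈ A*. -/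

import Mathlib

open Matrix
open scoped Kronecker

/-- The matrix of a word: extend the letter matrices `μ` multiplicatively. -/
def wordMat {K A : Type*} [Semiring K] {d : Type*} [Fintype d] [DecidableEq d]
    (μ : A → Matrix d d K) (w : List A) : Matrix d d K :=
  (w.map μ).prod

/-- The subword `w[I]` of `w` in the positions belonging to `I`, in order. -/
def subword {A : Type*} (w : List A) (I : Finset (Fin w.length)) : List A :=
  ((List.finRange w.length).filter (fun i => i ∈ I)).map w.get

/-- The shuffle product of two series:
`⟨R ⧢ S | w⟩ = Σ_{I ⊔ J = {1,…,|w|}} ⟨R|w[I]⟩⟨S|w[J]⟩`, the sum over ordered pairs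
`(I, J)` of disjoint complementary sets of positions. -/
def shuffleSer {K A : Type*} [CommSemiring K] (R S : List A → K) : List A → K :=
  fun w =>
    ∑ p ∈ Finset.univ.filter
        (fun p : Finset (Fin w.length) × Finset (Fin w.length) =>
          p.1 ∩ p.2 = ∅ ∧ p.1 ∪ p.2 = Finset.univ),
      R (subword w p.1) * S (subword w p.2)

section Aux

def shiftSet {k : ℕ} (I : Finset (Fin (k+1))) : Finset (Fin k) :=
  Finset.univ.filter (fun i => i.succ ∈ I)

@[simp] lemma mem_shiftSet {k : ℕ} {I : Finset (Fin (k+1))} {i : Fin k} :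
    i ∈ shiftSet I ↔ i.succ ∈ I := by simp [shiftSet]

def embSucc {k : ℕ} : Fin k ↪ Fin (k+1) := ⟨Fin.succ, Fin.succ_injective k⟩

@[simp] lemma embSucc_apply {k : ℕ} (i : Fin k) : embSucc i = i.succ := rfl

@[simp] lemma mem_map_embSucc {k : ℕ} {I : Finset (Fin k)} {i : Fin k} :
    i.succ ∈ I.map embSucc ↔ i ∈ I := by
  constructor
  · intro h
    rcases Finset.mem_map.mp h with ⟨b, hb, hbe⟩
    have : b = i := Fin.succ_injective k hbe
    rwa [this] at hb
  · exact fun h => Finset.mem_map.mpr ⟨i, h, rfl⟩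

@[simp] lemma zero_not_mem_map_embSucc {k : ℕ} {I : Finset (Fin k)} :
    (0 : Fin (k+1)) ∉ I.map embSucc := by
  intro h
  rcases Finset.mem_map.mp h with ⟨b, _, hbe⟩
  exact Fin.succ_ne_zero b hbe

lemma insert_map_shift {k : ℕ} {I : Finset (Fin (k+1))} (h0 : 0 ∈ I) :
    insert 0 ((shiftSet I).map embSucc) = I := by
  ext i
  induction i using Fin.cases with
  | zero => simp [h0]
  | succ j =>
    simp only [Finset.mem_insert, mem_map_embSucc, mem_shiftSet]
    simp [Fin.succ_ne_zero]

lemma map_shift {k : ℕ} {I : Finset (Fin (k+1))} (h0 : 0 ∉ I) :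
    (shiftSet I).map embSucc = I := by
  ext i
  induction i using Fin.cases with
  | zero => simp only [zero_not_mem_map_embSucc, false_iff]; exact h0
  | succ j => rw [mem_map_embSucc, mem_shiftSet]

lemma shift_insert_map {k : ℕ} (I : Finset (Fin k)) :
    shiftSet (insert 0 (I.map embSucc)) = I := by
  ext i
  rw [mem_shiftSet, Finset.mem_insert, mem_map_embSucc]
  simp [Fin.succ_ne_zero]

lemma shift_map {k : ℕ} (I : Finset (Fin k)) : shiftSet (I.map embSucc) = I := by
  ext i; rw [mem_shiftSet, mem_map_embSucc]

lemma subword_cons {A : Type*} (a : A) (w : List A) (I : Finset (Fin (w.length + 1))) :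
    subword (a :: w) I
      = (if (0 : Fin (w.length+1)) ∈ I then [a] else []) ++ subword w (shiftSet I) := by
  unfold subword
  show ((List.finRange (w.length + 1)).filter _).map _ = _
  rw [List.finRange_succ, List.filter_cons, List.filter_map]
  have htail : List.map ((a :: w).get ∘ Fin.succ)
      ((List.finRange w.length).filter ((fun i => decide (i ∈ I)) ∘ Fin.succ))
      = subword w (shiftSet I) := by
    unfold subword
    have hfe : ((List.finRange w.length).filter ((fun i => decide (i ∈ I)) ∘ Fin.succ))
        = (List.finRange w.length).filter (fun i => i ∈ shiftSet I) := by
      apply List.filter_congr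
      intro i _
      simp [Function.comp]
    rw [hfe]
    apply List.map_congr_left
    intro i _
    rfl
  by_cases h0 : (0 : Fin (w.length+1)) ∈ I
  · rw [if_pos (decide_eq_true h0), if_pos h0, List.map_cons, List.map_map]
    exact congrArg (List.cons ((a :: w).get (0 : Fin (w.length+1)))) htail
  · rw [if_neg (by simpa using h0), if_neg h0, List.map_map, List.nil_append]
    exact htail

lemma shuffleSer_nil {K A : Type*} [CommSemiring K] (R S : List A → K) :
    shuffleSer R S [] = R [] * S [] := by
  unfold shuffleSer
  have hI : ∀ I : Finset (Fin ([] : List A).length), I = ∅ := by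
    intro I
    ext i
    exact absurd i.isLt (Nat.not_lt_zero _)
  have h : (Finset.univ.filter
      (fun p : Finset (Fin ([] : List A).length) × Finset (Fin ([] : List A).length) =>
        p.1 ∩ p.2 = ∅ ∧ p.1 ∪ p.2 = Finset.univ)) = {(∅, ∅)} := by
    ext ⟨I, J⟩
    simp only [Finset.mem_filter, Finset.mem_univ, true_and, Finset.mem_singleton,
      Prod.mk.injEq, hI I, hI J, hI (Finset.univ : Finset (Fin ([] : List A).length))]
    tauto
  rw [h, Finset.sum_singleton]
  simp [subword]

lemma shuffleSer_comm {K A : Type*} [CommSemiring K] (R S : List A → K) (w : List A) :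
    shuffleSer R S w = shuffleSer S R w := by
  unfold shuffleSer
  refine Finset.sum_nbij' Prod.swap Prod.swap ?_ ?_ ?_ ?_ ?_
  · rintro ⟨I, J⟩ hp
    simp only [Finset.mem_filter, Finset.mem_univ, true_and, Prod.swap] at hp ⊢
    exact ⟨by rw [Finset.inter_comm]; exact hp.1, by rw [Finset.union_comm]; exact hp.2⟩
  · rintro ⟨I, J⟩ hp
    simp only [Finset.mem_filter, Finset.mem_univ, true_and, Prod.swap] at hp ⊢
    exact ⟨by rw [Finset.inter_comm]; exact hp.1, by rw [Finset.union_comm]; exact hp.2⟩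
  · rintro ⟨I, J⟩ _; rfl
  · rintro ⟨I, J⟩ _; rfl
  · rintro ⟨I, J⟩ _; exact mul_comm _ _

lemma shuffle_half {K A : Type*} [CommSemiring K] (R S : List A → K) (a : A) (w : List A) :
    ∑ p ∈ (Finset.univ.filter
        (fun p : Finset (Fin (w.length+1)) × Finset (Fin (w.length+1)) =>
          p.1 ∩ p.2 = ∅ ∧ p.1 ∪ p.2 = Finset.univ)).filter
          (fun p => (0 : Fin (w.length+1)) ∈ p.1),
      R (subword (a::w) p.1) * S (subword (a::w) p.2)
    = shuffleSer (fun u => R (a :: u)) S w := by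
  unfold shuffleSer
  refine Finset.sum_nbij' (fun p => (shiftSet p.1, shiftSet p.2))
      (fun p => (insert 0 (p.1.map embSucc), p.2.map embSucc)) ?_ ?_ ?_ ?_ ?_
  · rintro ⟨I, J⟩ hp
    simp only [Finset.mem_filter, Finset.mem_univ, true_and] at hp ⊢
    obtain ⟨⟨hint, huni⟩, h0⟩ := hp
    constructor
    · ext i
      simp only [Finset.mem_inter, mem_shiftSet, Finset.notMem_empty, iff_false, not_and]
      intro h1 h2
      have : i.succ ∈ I ∩ J := Finset.mem_inter.mpr ⟨h1, h2⟩
      simp [hint] at this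
    · ext i
      simp only [Finset.mem_union, mem_shiftSet, Finset.mem_univ, iff_true]
      have : i.succ ∈ I ∪ J := by rw [huni]; exact Finset.mem_univ _
      simpa using this
  · rintro ⟨I, J⟩ hp
    simp only [Finset.mem_filter, Finset.mem_univ, true_and] at hp ⊢
    obtain ⟨hint, huni⟩ := hp
    refine ⟨⟨?_, ?_⟩, Finset.mem_insert_self _ _⟩
    · ext i
      simp only [Finset.mem_inter, Finset.mem_insert, Finset.notMem_empty, iff_false, not_and]
      rintro (h1 | h1) h2
      · subst h1; exact absurd h2 zero_not_mem_map_embSucc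
      · rcases Finset.mem_map.mp h1 with ⟨b, hb, rfl⟩
        have : b ∈ I ∩ J := Finset.mem_inter.mpr ⟨hb, mem_map_embSucc.mp h2⟩
        simp [hint] at this
    · ext i
      simp only [Finset.mem_union, Finset.mem_insert, Finset.mem_univ, iff_true]
      induction i using Fin.cases with
      | zero => exact Or.inl (Or.inl rfl)
      | succ j =>
        have : j ∈ I ∪ J := by rw [huni]; exact Finset.mem_univ _
        rcases Finset.mem_union.mp this with h | h
        · exact Or.inl (Or.inr (mem_map_embSucc.mpr h))
        · exact Or.inr (mem_map_embSucc.mpr h)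
  · rintro ⟨I, J⟩ hp
    simp only [Finset.mem_filter, Finset.mem_univ, true_and] at hp
    obtain ⟨⟨hint, huni⟩, h0⟩ := hp
    have h0J : (0 : Fin (w.length+1)) ∉ J := by
      intro hJ
      have : (0 : Fin (w.length+1)) ∈ I ∩ J := Finset.mem_inter.mpr ⟨h0, hJ⟩
      simp [hint] at this
    simp only [Prod.mk.injEq]
    exact ⟨insert_map_shift h0, map_shift h0J⟩
  · rintro ⟨I, J⟩ _
    simp only [Prod.mk.injEq]
    exact ⟨shift_insert_map I, shift_map J⟩
  · rintro ⟨I, J⟩ hp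
    simp only [Finset.mem_filter, Finset.mem_univ, true_and] at hp
    obtain ⟨⟨hint, huni⟩, h0⟩ := hp
    have h0J : (0 : Fin (w.length+1)) ∉ J := by
      intro hJ
      have : (0 : Fin (w.length+1)) ∈ I ∩ J := Finset.mem_inter.mpr ⟨h0, hJ⟩
      simp [hint] at this
    rw [subword_cons, subword_cons, if_pos h0, if_neg h0J]
    simp

lemma shuffleSer_cons {K A : Type*} [CommSemiring K] (R S : List A → K) (a : A) (w : List A) :
    shuffleSer R S (a :: w)
      = shuffleSer (fun u => R (a :: u)) S w + shuffleSer R (fun u => S (a :: u)) w := by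
  conv_lhs => rw [shuffleSer]
  show (∑ p ∈ Finset.univ.filter
        (fun p : Finset (Fin (w.length+1)) × Finset (Fin (w.length+1)) =>
          p.1 ∩ p.2 = ∅ ∧ p.1 ∪ p.2 = Finset.univ),
      R (subword (a::w) p.1) * S (subword (a::w) p.2)) = _
  rw [← Finset.sum_filter_add_sum_filter_not _ (fun p => (0 : Fin (w.length+1)) ∈ p.1)]
  congr 1
  · exact shuffle_half R S a w
  · have hswap : ∑ p ∈ (Finset.univ.filter
        (fun p : Finset (Fin (w.length+1)) × Finset (Fin (w.length+1)) =>
          p.1 ∩ p.2 = ∅ ∧ p.1 ∪ p.2 = Finset.univ)).filter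
          (fun p => ¬ (0 : Fin (w.length+1)) ∈ p.1),
        R (subword (a::w) p.1) * S (subword (a::w) p.2)
      = ∑ p ∈ (Finset.univ.filter
        (fun p : Finset (Fin (w.length+1)) × Finset (Fin (w.length+1)) =>
          p.1 ∩ p.2 = ∅ ∧ p.1 ∪ p.2 = Finset.univ)).filter
          (fun p => (0 : Fin (w.length+1)) ∈ p.1),
        S (subword (a::w) p.1) * R (subword (a::w) p.2) := by
      refine Finset.sum_nbij' Prod.swap Prod.swap ?_ ?_ ?_ ?_ ?_
      · rintro ⟨I, J⟩ hp
        simp only [Finset.mem_filter, Finset.mem_univ, true_and, Prod.swap] at hp ⊢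
        obtain ⟨⟨hint, huni⟩, h0⟩ := hp
        have h0J : (0 : Fin (w.length+1)) ∈ J := by
          have : (0 : Fin (w.length+1)) ∈ I ∪ J := by rw [huni]; exact Finset.mem_univ _
          rcases Finset.mem_union.mp this with h | h
          · exact absurd h h0
          · exact h
        exact ⟨⟨by rw [Finset.inter_comm]; exact hint, by rw [Finset.union_comm]; exact huni⟩, h0J⟩
      · rintro ⟨I, J⟩ hp
        simp only [Finset.mem_filter, Finset.mem_univ, true_and, Prod.swap] at hp ⊢
        obtain ⟨⟨hint, huni⟩, h0⟩ := hp
        have h0J : (0 : Fin (w.length+1)) ∉ J := by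
          intro hJ
          have : (0 : Fin (w.length+1)) ∈ I ∩ J := Finset.mem_inter.mpr ⟨h0, hJ⟩
          simp [hint] at this
        exact ⟨⟨by rw [Finset.inter_comm]; exact hint, by rw [Finset.union_comm]; exact huni⟩, h0J⟩
      · rintro ⟨I, J⟩ _; rfl
      · rintro ⟨I, J⟩ _; rfl
      · rintro ⟨I, J⟩ _; exact mul_comm _ _
    rw [hswap, shuffle_half S R a w, shuffleSer_comm]

end Aux

lemma kron_vecMul {K : Type*} [CommSemiring K] {n m : ℕ}
    (v₁ : Fin n → K) (v₂ : Fin m → K)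
    (M : Matrix (Fin n) (Fin n) K) (N : Matrix (Fin m) (Fin m) K) :
    (fun ij : Fin n × Fin m => v₁ ij.1 * v₂ ij.2) ᵥ* (M ⊗ₖ N)
      = fun ij : Fin n × Fin m => (v₁ ᵥ* M) ij.1 * (v₂ ᵥ* N) ij.2 := by
  funext ij
  obtain ⟨i, j⟩ := ij
  simp only [Matrix.vecMul, dotProduct, Fintype.sum_prod_type,
    Matrix.kroneckerMap_apply, Finset.sum_mul, Finset.mul_sum]
  rw [Finset.sum_comm]
  refine Finset.sum_congr rfl fun k _ => Finset.sum_congr rfl fun l _ => by ring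

lemma wordMat_nil {K A : Type*} [Semiring K] {d : Type*} [Fintype d] [DecidableEq d]
    (μ : A → Matrix d d K) : wordMat μ ([] : List A) = 1 := rfl

lemma wordMat_cons {K A : Type*} [Semiring K] {d : Type*} [Fintype d] [DecidableEq d]
    (μ : A → Matrix d d K) (a : A) (w : List A) :
    wordMat μ (a :: w) = μ a * wordMat μ w := by
  simp [wordMat]

lemma key {K A : Type*} [CommSemiring K] {n m : ℕ}
    (μ₁ : A → Matrix (Fin n) (Fin n) K) (μ₂ : A → Matrix (Fin m) (Fin m) K)
    (gam₁ : Fin n → K) (gam₂ : Fin m → K) :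
    ∀ (w : List A) (lam₁ : Fin n → K) (lam₂ : Fin m → K),
      (fun ij : Fin n × Fin m => lam₁ ij.1 * lam₂ ij.2) ⬝ᵥ
        (wordMat (fun a => μ₁ a ⊗ₖ (1 : Matrix (Fin m) (Fin m) K)
              + (1 : Matrix (Fin n) (Fin n) K) ⊗ₖ μ₂ a) w *ᵥ
          fun ij : Fin n × Fin m => gam₁ ij.1 * gam₂ ij.2)
        = shuffleSer (fun u => lam₁ ⬝ᵥ (wordMat μ₁ u *ᵥ gam₁))
            (fun u => lam₂ ⬝ᵥ (wordMat μ₂ u *ᵥ gam₂)) w := by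
  intro w
  induction w with
  | nil =>
    intro lam₁ lam₂
    rw [shuffleSer_nil, wordMat_nil, wordMat_nil, wordMat_nil, Matrix.one_mulVec,
      Matrix.one_mulVec, Matrix.one_mulVec]
    simp only [dotProduct, Fintype.sum_prod_type, Finset.sum_mul, Finset.mul_sum]
    rw [Finset.sum_comm]
    refine Finset.sum_congr rfl fun i _ => Finset.sum_congr rfl fun j _ => by ring
  | cons a w ih =>
    intro lam₁ lam₂
    rw [wordMat_cons, ← Matrix.mulVec_mulVec, Matrix.dotProduct_mulVec,
      Matrix.vecMul_add, kron_vecMul, kron_vecMul, Matrix.vecMul_one, Matrix.vecMul_one,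
      add_dotProduct]
    rw [ih (lam₁ ᵥ* μ₁ a) lam₂, ih lam₁ (lam₂ ᵥ* μ₂ a), shuffleSer_cons]
    congr 1
    · congr 1
      funext u
      rw [wordMat_cons]
      simp [Matrix.dotProduct_mulVec, Matrix.vecMul_vecMul, Matrix.mulVec_mulVec]
    · congr 1
      funext u
      rw [wordMat_cons]
      simp [Matrix.dotProduct_mulVec, Matrix.vecMul_vecMul, Matrix.mulVec_mulVec]

/-- If `(lam₁, μ₁, gam₁)` represents `R` and `(lam₂, μ₂, gam₂)`
represents `S`, then `(λ₁⊗λ₂, a ↦ μ₁(a)⊗I + I⊗μ₂(a), γ₁⊗γ₂)` represents the shuffle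
product `R ⧢ S`. -/
theorem stmt_8 {K A : Type*} [CommSemiring K] [Fintype A] {n m : ℕ}
    (R S : List A → K)
    (lam₁ : Fin n → K) (μ₁ : A → Matrix (Fin n) (Fin n) K) (gam₁ : Fin n → K)
    (lam₂ : Fin m → K) (μ₂ : A → Matrix (Fin m) (Fin m) K) (gam₂ : Fin m → K)
    (hR : ∀ w, R w = lam₁ ⬝ᵥ (wordMat μ₁ w *ᵥ gam₁))
    (hS : ∀ w, S w = lam₂ ⬝ᵥ (wordMat μ₂ w *ᵥ gam₂)) :
    ∀ w : List A,
      (fun ij : Fin n × Fin m => lam₁ ij.1 * lam₂ ij.2) ⬝ᵥ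
        (wordMat (fun a => μ₁ a ⊗ₖ (1 : Matrix (Fin m) (Fin m) K)
              + (1 : Matrix (Fin n) (Fin n) K) ⊗ₖ μ₂ a) w *ᵥ
          fun ij : Fin n × Fin m => gam₁ ij.1 * gam₂ ij.2)
        = shuffleSer R S w := by
  intro w
  rw [key μ₁ μ₂ gam₁ gam₂ w lam₁ lam₂]
  have h1 : (fun u => lam₁ ⬝ᵥ (wordMat μ₁ u *ᵥ gam₁)) = R := funext fun u => (hR u).symm
  have h2 : (fun u => lam₂ ⬝ᵥ (wordMat μ₂ u *ᵥ gam₂)) = S := funext fun u => (hS u).symm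
  rw [h1, h2]
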